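/- Necessary condition 3 for the triangle averaging operator: if T_1 : L^p × L^q → L^r is bounded, then d/p + 1/q ≤ d - 1 + 1/r. Key estimate: with f_δ = χ_{B(0,δ)} and g_δ = χ_{A_δ}, for all x with ||x|-1| ≤ δ/2 one has T_1(f_δ, g_δ)(x) ≥ c δ^{d-1}. -/

import Mathlib

open MeasureTheory Metric Filter
open scoped ENNReal NNReal

noncomputable section

variable (d : ℕ)


/-- The product measurable structure on `d × d` real matrices. -/
instance matrixMeasurableSpace : MeasurableSpace (Matrix (Fin d) (Fin d) ℝ) :=
  inferInstanceAs (MeasurableSpace (Fin d → Fin d → ℝ))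

/-- Action of a matrix on a point of `ℝ^d`. -/
def rotAct (R : Matrix (Fin d) (Fin d) ℝ) (u : EuclideanSpace ℝ (Fin d)) :
    EuclideanSpace ℝ (Fin d) := WithLp.toLp 2 (R.mulVec u)

/-- The triangle averaging operator
`T₁(f,g)(x) = ∫_{O(d)} f(x - Ru) g(x - Rv) dμ(R)`. -/
def triangleAvg (μ : Measure (Matrix (Fin d) (Fin d) ℝ)) (u v : EuclideanSpace ℝ (Fin d))
    (f g : EuclideanSpace ℝ (Fin d) → ℝ) (x : EuclideanSpace ℝ (Fin d)) : ℝ :=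
  ∫ R, f (x - rotAct d R u) * g (x - rotAct d R v) ∂μ

/-- The annulus `A_δ = {x : 1-δ ≤ |x| ≤ 1+δ}`. -/
def annulus (δ : ℝ) : Set (EuclideanSpace ℝ (Fin d)) := {y | 1 - δ ≤ ‖y‖ ∧ ‖y‖ ≤ 1 + δ}

/-
For a rotation `R` with `|x - R u| < δ`, the point `x - R v` lies in `A_δ` automatically, since
`|R u - R v| = |u - v| = 1`. Hence `T₁(f_δ, g_δ)(x)` is at least the probability that `R u` falls
in a ball of radius `≈ δ` centred on the unit sphere. The law of `R u` is a probability measure on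
the sphere whose balls with centres on the sphere all have equal mass, and integrating the mass of
the `δ`-balls centred at all points of `ℝ^d` (Fubini) shows that each such cap has mass `≳ δ^(d-1)`.
Testing the bound on `f_δ, g_δ` then gives `δ^(d-1) δ^(1/r) ≲ δ^(d/p) δ^(1/q)`, and letting
`δ → 0` gives the exponent inequality.
-/

open Module Topology

theorem one_add_pow_sub_one_sub_pow_le {t : ℝ} (ht0 : 0 ≤ t) (ht1 : t ≤ 1) (n : ℕ) :
    (1 + t) ^ n - (1 - t) ^ n ≤ (2 ^ n + n) * t := by
  have hconv := (convexOn_pow n).2 (Set.mem_Ici.2 zero_le_one) (Set.mem_Ici.2 zero_le_two)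
    (sub_nonneg.2 ht1) ht0 (sub_add_cancel 1 t)
  simp only [smul_eq_mul, mul_one, one_pow, show 1 - t + t * 2 = 1 + t by ring] at hconv
  have hbernoulli : 1 + n * (-t) ≤ (1 + -t) ^ n := one_add_mul_le_pow (by linarith) n
  rw [← sub_eq_add_neg] at hbernoulli
  nlinarith

theorem le_of_forall_mul_rpow_le {K₁ K₂ a b : ℝ} (hK₁ : 0 < K₁)
    (h : ∀ δ : ℝ, 0 < δ → δ ≤ 1 → K₁ * δ ^ b ≤ K₂ * δ ^ a) : a ≤ b := by
  by_contra! hba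
  have hlim : Tendsto (fun δ : ℝ => K₂ * δ ^ (a - b)) (𝓝[>] 0) (𝓝 0) := by
    have h0 := (Real.continuousAt_rpow_const 0 (a - b) (Or.inr (sub_pos.2 hba).le)).tendsto
    rw [Real.zero_rpow (sub_pos.2 hba).ne'] at h0
    simpa using (h0.const_mul K₂).mono_left nhdsWithin_le_nhds
  have hev : ∀ᶠ δ : ℝ in 𝓝[>] 0, K₁ ≤ K₂ * δ ^ (a - b) := by
    filter_upwards [Ioc_mem_nhdsGT one_pos] with δ ⟨hδ0, hδ1⟩
    rw [← mul_le_mul_iff_left₀ (Real.rpow_pos_of_pos hδ0 b), mul_assoc, ← Real.rpow_add hδ0,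
      sub_add_cancel]
    exact h δ hδ0 hδ1
  exact hK₁.not_ge (ge_of_tendsto hlim hev)

theorem one_div_eq_ofReal_one_div_toReal {p : ℝ≥0∞} (hp : p ≠ 0) :
    1 / p = ENNReal.ofReal (1 / p.toReal) := by
  rw [one_div, one_div, ← ENNReal.toReal_inv, ENNReal.ofReal_toReal (ENNReal.inv_ne_top.2 hp)]

theorem natCast_div_add_one_div_le_of_toReal {n : ℕ} {p q r : ℝ≥0∞} (hp : p ≠ 0) (hq : q ≠ 0)
    (hr : r ≠ 0) (h : (n : ℝ) * (1 / p.toReal) + 1 / q.toReal ≤ ((n - 1 : ℕ) : ℝ) + 1 / r.toReal) :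
    (n : ℝ≥0∞) / p + 1 / q ≤ n - 1 + 1 / r := by
  have hsub : (n : ℝ≥0∞) - 1 = ((n - 1 : ℕ) : ℝ≥0∞) := by rw [ENNReal.natCast_sub, Nat.cast_one]
  rw [hsub, div_eq_mul_one_div, one_div_eq_ofReal_one_div_toReal hp,
    one_div_eq_ofReal_one_div_toReal hq, one_div_eq_ofReal_one_div_toReal hr,
    ← ENNReal.ofReal_natCast, ← ENNReal.ofReal_natCast (n - 1),
    ← ENNReal.ofReal_mul (Nat.cast_nonneg _), ← ENNReal.ofReal_add (by positivity) (by positivity),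
    ← ENNReal.ofReal_add (by positivity) (by positivity)]
  exact ENNReal.ofReal_le_ofReal h

theorem ofReal_mul_measure_rpow_le_eLpNorm {α : Type*} [MeasurableSpace α] {μ : Measure α}
    {f : α → ℝ} {S : Set α} (hS : MeasurableSet S) (hS0 : μ S ≠ 0) {r : ℝ≥0∞} (hr : r ≠ 0)
    {c : ℝ} (hc : 0 ≤ c) (hf : ∀ x ∈ S, c ≤ f x) :
    ENNReal.ofReal c * μ S ^ (1 / r.toReal) ≤ eLpNorm f r μ := by
  have hmono : eLpNorm (S.indicator fun _ => c) r μ ≤ eLpNorm f r μ := by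
    refine eLpNorm_mono fun x => ?_
    by_cases hx : x ∈ S
    · simpa [hx, abs_of_nonneg hc] using (hf x hx).trans (le_abs_self _)
    · simp [hx]
  rwa [eLpNorm_indicator_const' hS hS0 hr, Real.enorm_eq_ofReal hc] at hmono

theorem exists_norm_eq_one_dist_eq {E : Type*} [NormedAddCommGroup E] [NormedSpace ℝ E] {x : E}
    (hx : x ≠ 0) : ∃ y : E, ‖y‖ = 1 ∧ dist x y = |‖x‖ - 1| := by
  refine ⟨‖x‖⁻¹ • x, norm_smul_inv_norm hx, ?_⟩
  rw [dist_eq_norm, show x - ‖x‖⁻¹ • x = (1 - ‖x‖⁻¹) • x by rw [sub_smul, one_smul], norm_smul,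
    Real.norm_eq_abs, ← abs_norm x, ← abs_mul, abs_norm, sub_mul, one_mul,
    inv_mul_cancel₀ (norm_ne_zero_iff.2 hx)]

section HaarMeasure

variable {E : Type*} [NormedAddCommGroup E] [NormedSpace ℝ E] [FiniteDimensional ℝ E]
  [MeasurableSpace E] [BorelSpace E] (μ : Measure E) [μ.IsAddHaarMeasure]

theorem lintegral_measure_ball (ν : Measure E) [SFinite ν] (s : ℝ) :
    ∫⁻ z, ν (ball z s) ∂μ = ν Set.univ * μ (ball 0 s) := by
  have hU : MeasurableSet {p : E × E | dist p.1 p.2 < s} :=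
    (isOpen_lt continuous_dist continuous_const).measurableSet
  calc ∫⁻ z, ν (ball z s) ∂μ
      = ∫⁻ z, ∫⁻ w, {p : E × E | dist p.1 p.2 < s}.indicator 1 (w, z) ∂ν ∂μ := by
        refine lintegral_congr fun z => ?_
        rw [← lintegral_indicator_one measurableSet_ball]
        rfl
    _ = ∫⁻ w, ∫⁻ z, {p : E × E | dist p.1 p.2 < s}.indicator 1 (w, z) ∂μ ∂ν :=
        lintegral_lintegral_swap ((measurable_one.indicator hU).comp measurable_swap).aemeasurable
    _ = ∫⁻ _, μ (ball 0 s) ∂ν := by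
        refine lintegral_congr fun w => ?_
        rw [← μ.addHaar_ball_center w, ← lintegral_indicator_one measurableSet_ball]
        refine lintegral_congr fun z => ?_
        simp [Set.indicator, mem_ball, dist_comm]
    _ = ν Set.univ * μ (ball 0 s) := by rw [lintegral_const, mul_comm]

theorem addHaar_annulus_le [Nontrivial E] {t : ℝ} (ht0 : 0 ≤ t) (ht1 : t ≤ 1) :
    μ {z : E | 1 - t ≤ ‖z‖ ∧ ‖z‖ ≤ 1 + t} ≤
      ENNReal.ofReal ((2 ^ finrank ℝ E + finrank ℝ E) * t) * μ (ball 0 1) := by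
  have hsub : {z : E | 1 - t ≤ ‖z‖ ∧ ‖z‖ ≤ 1 + t} ⊆ closedBall 0 (1 + t) \ ball 0 (1 - t) :=
    fun z hz => by simpa [not_lt] using hz.symm
  calc μ {z : E | 1 - t ≤ ‖z‖ ∧ ‖z‖ ≤ 1 + t}
      ≤ μ (closedBall 0 (1 + t)) - μ (ball 0 (1 - t)) :=
        (measure_mono hsub).trans_eq (measure_sdiff (ball_subset_closedBall.trans
          (closedBall_subset_closedBall (by linarith))) measurableSet_ball.nullMeasurableSet
          measure_ball_lt_top.ne)
    _ = ENNReal.ofReal ((1 + t) ^ finrank ℝ E - (1 - t) ^ finrank ℝ E) * μ (ball 0 1) := by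
        rw [μ.addHaar_closedBall 0 (by linarith), μ.addHaar_ball 0 (r := 1 - t) (by linarith),
          ENNReal.ofReal_sub _ (pow_nonneg (by linarith) _),
          ENNReal.sub_mul fun _ _ => measure_ball_lt_top.ne]
    _ ≤ _ := by gcongr; exact one_add_pow_sub_one_sub_pow_le ht0 ht1 _

theorem le_addHaar_shell [Nontrivial E] {t : ℝ} (ht : 0 ≤ t) :
    ENNReal.ofReal t * μ (ball 0 1) ≤ μ {z : E | |‖z‖ - 1| ≤ t} := by
  have hsub : closedBall (0 : E) (1 + t) \ ball 0 1 ⊆ {z : E | |‖z‖ - 1| ≤ t} := by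
    rintro z ⟨h1, h2⟩
    simp only [mem_closedBall_zero_iff, mem_ball_zero_iff, not_lt] at h1 h2
    show |‖z‖ - 1| ≤ t
    exact abs_le.2 ⟨by linarith, by linarith⟩
  calc ENNReal.ofReal t * μ (ball 0 1)
      = ENNReal.ofReal (1 + t) * μ (ball 0 1) - μ (ball 0 1) := by
        rw [ENNReal.ofReal_add zero_le_one ht, ENNReal.ofReal_one, add_mul, one_mul,
          ENNReal.add_sub_cancel_left measure_ball_lt_top.ne]
    _ ≤ μ (closedBall 0 (1 + t)) - μ (ball 0 1) := by
        rw [μ.addHaar_closedBall 0 (by linarith)]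
        gcongr
        exact le_self_pow₀ (by linarith) finrank_pos.ne'
    _ = μ (closedBall (0 : E) (1 + t) \ ball 0 1) :=
        (measure_sdiff (ball_subset_closedBall.trans (closedBall_subset_closedBall (by linarith)))
          measurableSet_ball.nullMeasurableSet measure_ball_lt_top.ne).symm
    _ ≤ μ {z : E | |‖z‖ - 1| ≤ t} := measure_mono hsub

theorem addHaar_ball_le_measure_ball_mul_addHaar_annulus (ν : Measure E) [IsProbabilityMeasure ν]
    (hν : ν (sphere 0 1)ᶜ = 0)
    (hinv : ∀ y z : E, ‖y‖ = 1 → ‖z‖ = 1 → ∀ t, ν (ball y t) = ν (ball z t))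
    (s : ℝ) {y : E} (hy : ‖y‖ = 1) :
    μ (ball 0 s) ≤ ν (ball y (2 * s)) * μ {z : E | 1 - s ≤ ‖z‖ ∧ ‖z‖ ≤ 1 + s} := by
  set A := {z : E | 1 - s ≤ ‖z‖ ∧ ‖z‖ ≤ 1 + s}
  have hA : MeasurableSet A :=
    ((isClosed_le continuous_const continuous_norm).inter
      (isClosed_le continuous_norm continuous_const)).measurableSet
  -- A ball of radius `s` meeting the unit sphere at `w` has its centre in `A` and lies in
  -- `ball w (2 * s)`; one missing the sphere is `ν`-null.
  have hpointwise : ∀ z, ν (ball z s) ≤ A.indicator (fun _ => ν (ball y (2 * s))) z := by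
    intro z
    by_cases hmeet : ∃ w ∈ ball z s, ‖w‖ = 1
    · obtain ⟨w, hw, hw1⟩ := hmeet
      rw [mem_ball, dist_eq_norm] at hw
      have hzw : |‖z‖ - 1| < s := by
        rw [← hw1, abs_sub_comm]
        exact (abs_norm_sub_norm_le w z).trans_lt hw
      have hzA : z ∈ A :=
        ⟨by linarith [neg_abs_le (‖z‖ - 1)], by linarith [le_abs_self (‖z‖ - 1)]⟩
      rw [Set.indicator_of_mem hzA, ← hinv w y hw1 hy]
      exact measure_mono (ball_subset_ball' (by rw [dist_eq_norm, norm_sub_rev]; linarith))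
    · push Not at hmeet
      refine (measure_mono_null (fun w hw => ?_) hν).trans_le zero_le
      exact fun hsph => hmeet w hw (mem_sphere_zero_iff_norm.1 hsph)
  calc μ (ball 0 s) = ∫⁻ z, ν (ball z s) ∂μ := by
        rw [lintegral_measure_ball, measure_univ, one_mul]
    _ ≤ ∫⁻ z, A.indicator (fun _ => ν (ball y (2 * s))) z ∂μ := lintegral_mono hpointwise
    _ = ν (ball y (2 * s)) * μ A := lintegral_indicator_const hA _

theorem ofReal_le_measure_ball_of_sphere [Nontrivial E] (ν : Measure E) [IsProbabilityMeasure ν]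
    (hν : ν (sphere 0 1)ᶜ = 0)
    (hinv : ∀ y z : E, ‖y‖ = 1 → ‖z‖ = 1 → ∀ t, ν (ball y t) = ν (ball z t))
    {s : ℝ} (hs0 : 0 < s) (hs1 : s ≤ 1) {y : E} (hy : ‖y‖ = 1) :
    ENNReal.ofReal (s ^ (finrank ℝ E - 1) / (2 ^ finrank ℝ E + finrank ℝ E)) ≤
      ν (ball y (2 * s)) := by
  let μ : Measure E := Measure.addHaar
  have h : ENNReal.ofReal (s ^ finrank ℝ E) * μ (ball 0 1) ≤
      ν (ball y (2 * s)) * ENNReal.ofReal ((2 ^ finrank ℝ E + finrank ℝ E) * s) * μ (ball 0 1) :=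
    calc ENNReal.ofReal (s ^ finrank ℝ E) * μ (ball 0 1) = μ (ball 0 s) :=
          (μ.addHaar_ball_of_pos 0 hs0).symm
      _ ≤ ν (ball y (2 * s)) * μ {z : E | 1 - s ≤ ‖z‖ ∧ ‖z‖ ≤ 1 + s} :=
          addHaar_ball_le_measure_ball_mul_addHaar_annulus μ ν hν hinv s hy
      _ ≤ _ := by rw [mul_assoc]; gcongr; exact addHaar_annulus_le μ hs0.le hs1
  rw [ENNReal.mul_le_mul_iff_left (measure_ball_pos _ _ one_pos).ne' measure_ball_lt_top.ne] at h
  calc ENNReal.ofReal (s ^ (finrank ℝ E - 1) / (2 ^ finrank ℝ E + finrank ℝ E))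
      = ENNReal.ofReal (s ^ finrank ℝ E) /
          ENNReal.ofReal ((2 ^ finrank ℝ E + finrank ℝ E) * s) := by
        rw [← ENNReal.ofReal_div_of_pos (by positivity)]
        congr 1
        field_simp
        exact pow_sub_one_mul finrank_pos.ne' s
    _ ≤ ν (ball y (2 * s)) := ENNReal.div_le_of_le_mul h

theorem ofReal_mul_rpow_le_of_eLpNorm_le [Nontrivial E] {F : E → ℝ} {p q r : ℝ≥0∞} (hr : r ≠ 0)
    {C : ℝ≥0} {δ : ℝ} (hδ0 : 0 < δ) (hδ1 : δ ≤ 1)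
    (hF : eLpNorm F r μ ≤ C * eLpNorm ((ball (0 : E) δ).indicator (1 : E → ℝ)) p μ *
      eLpNorm ({y : E | 1 - δ ≤ ‖y‖ ∧ ‖y‖ ≤ 1 + δ}.indicator (1 : E → ℝ)) q μ)
    {c : ℝ} (hc : 0 ≤ c) (hlow : ∀ x : E, |‖x‖ - 1| ≤ δ / 2 → c * δ ^ (finrank ℝ E - 1) ≤ F x) :
    ENNReal.ofReal (c * δ ^ (finrank ℝ E - 1)) *
        (ENNReal.ofReal (δ / 2) * μ (ball 0 1)) ^ (1 / r.toReal) ≤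
      C * (ENNReal.ofReal (δ ^ finrank ℝ E) * μ (ball 0 1)) ^ (1 / p.toReal) *
        (ENNReal.ofReal ((2 ^ finrank ℝ E + finrank ℝ E) * δ) * μ (ball 0 1)) ^ (1 / q.toReal) := by
  set S := {x : E | |‖x‖ - 1| ≤ δ / 2}
  have hS : MeasurableSet S :=
    (isClosed_le (continuous_norm.sub continuous_const).abs continuous_const).measurableSet
  have hSvol : ENNReal.ofReal (δ / 2) * μ (ball 0 1) ≤ μ S := le_addHaar_shell μ (by positivity)
  have hS0 : μ S ≠ 0 := (lt_of_lt_of_le (ENNReal.mul_pos (by simpa using hδ0)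
    (measure_ball_pos _ _ one_pos).ne') hSvol).ne'
  calc _ ≤ ENNReal.ofReal (c * δ ^ (finrank ℝ E - 1)) * μ S ^ (1 / r.toReal) := by gcongr
    _ ≤ eLpNorm F r μ := ofReal_mul_measure_rpow_le_eLpNorm hS hS0 hr (by positivity) hlow
    _ ≤ _ := hF.trans <| by
      gcongr
      · refine (eLpNorm_indicator_const_le (1 : ℝ) _).trans ?_
        rw [μ.addHaar_ball_of_pos 0 hδ0, enorm_one, one_mul]
      · refine (eLpNorm_indicator_const_le (1 : ℝ) _).trans ?_
        rw [enorm_one, one_mul]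
        gcongr
        exact addHaar_annulus_le μ hδ0.le hδ1

theorem natCast_div_add_one_div_le_of_eLpNorm_le [Nontrivial E] (T : (E → ℝ) → (E → ℝ) → E → ℝ)
    {p q r : ℝ≥0∞} (hp : p ≠ 0) (hq : q ≠ 0) (hr : r ≠ 0) (C : ℝ≥0)
    (hbound : ∀ f g : E → ℝ, Measurable f → Measurable g →
      eLpNorm (T f g) r μ ≤ C * eLpNorm f p μ * eLpNorm g q μ)
    {c : ℝ} (hc : 0 < c)
    (hT : ∀ δ : ℝ, 0 < δ → δ ≤ 1 → ∀ x : E, |‖x‖ - 1| ≤ δ / 2 →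
      c * δ ^ (finrank ℝ E - 1) ≤
        T ((ball 0 δ).indicator 1) ({y | 1 - δ ≤ ‖y‖ ∧ ‖y‖ ≤ 1 + δ}.indicator 1) x) :
    (finrank ℝ E : ℝ≥0∞) / p + 1 / q ≤ finrank ℝ E - 1 + 1 / r := by
  refine natCast_div_add_one_div_le_of_toReal hp hq hr ?_
  set n := finrank ℝ E
  set K : ℝ := 2 ^ n + n
  set V := (μ (ball 0 1)).toReal
  have hV : 0 < V := ENNReal.toReal_pos (measure_ball_pos _ _ one_pos).ne' measure_ball_lt_top.ne
  refine le_of_forall_mul_rpow_le (K₁ := c * (V / 2) ^ (1 / r.toReal))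
    (K₂ := C * V ^ (1 / p.toReal) * (K * V) ^ (1 / q.toReal)) (by positivity)
    fun δ hδ0 hδ1 => ?_
  have hannulus : MeasurableSet {y : E | 1 - δ ≤ ‖y‖ ∧ ‖y‖ ≤ 1 + δ} :=
    ((isClosed_le continuous_const continuous_norm).inter
      (isClosed_le continuous_norm continuous_const)).measurableSet
  have h := ENNReal.toReal_mono (by finiteness) <| ofReal_mul_rpow_le_of_eLpNorm_le μ hr hδ0 hδ1
    (hbound _ _ (measurable_one.indicator measurableSet_ball) (measurable_one.indicator hannulus))
    hc.le (hT δ hδ0 hδ1)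
  simp only [ENNReal.toReal_mul, ← ENNReal.toReal_rpow, ENNReal.coe_toReal] at h
  rw [ENNReal.toReal_ofReal (by positivity), ENNReal.toReal_ofReal (by positivity),
    ENNReal.toReal_ofReal (by positivity), ENNReal.toReal_ofReal (by positivity)] at h
  convert h using 1
  · rw [Real.rpow_add hδ0, Real.rpow_natCast, show δ / 2 * V = δ * (V / 2) by ring,
      Real.mul_rpow hδ0.le (by positivity)]
    ring
  · rw [Real.rpow_add hδ0, Real.mul_rpow (x := δ ^ n) (by positivity) hV.le,
      show K * δ * V = δ * (K * V) by ring, Real.mul_rpow (x := δ) hδ0.le (by positivity),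
      ← Real.rpow_natCast δ n, ← Real.rpow_mul hδ0.le]
    ring

end HaarMeasure

section Rotation

variable {d}

instance matrixBorelSpace : BorelSpace (Matrix (Fin d) (Fin d) ℝ) :=
  inferInstanceAs (BorelSpace (Fin d → Fin d → ℝ))

theorem rotAct_eq_toEuclideanCLM (R : Matrix (Fin d) (Fin d) ℝ) (x : EuclideanSpace ℝ (Fin d)) :
    rotAct d R x = Matrix.toEuclideanCLM (𝕜 := ℝ) R x :=
  rfl

theorem rotAct_mul (A B : Matrix (Fin d) (Fin d) ℝ) (x : EuclideanSpace ℝ (Fin d)) :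
    rotAct d (A * B) x = rotAct d A (rotAct d B x) := by
  simp [rotAct_eq_toEuclideanCLM]

theorem norm_rotAct {A : Matrix (Fin d) (Fin d) ℝ} (hA : A ∈ Matrix.orthogonalGroup (Fin d) ℝ)
    (x : EuclideanSpace ℝ (Fin d)) : ‖rotAct d A x‖ = ‖x‖ :=
  Unitary.norm_map ⟨_, Unitary.map_mem (Matrix.toEuclideanCLM (n := Fin d) (𝕜 := ℝ)) hA⟩ x

theorem isometry_rotAct {A : Matrix (Fin d) (Fin d) ℝ}
    (hA : A ∈ Matrix.orthogonalGroup (Fin d) ℝ) : Isometry (rotAct d A) :=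
  AddMonoidHomClass.isometry_of_norm (Matrix.toEuclideanCLM (𝕜 := ℝ) A) (norm_rotAct hA)

theorem exists_mem_orthogonalGroup_rotAct_eq {y z : EuclideanSpace ℝ (Fin d)} (h : ‖y‖ = ‖z‖) :
    ∃ A ∈ Matrix.orthogonalGroup (Fin d) ℝ, rotAct d A y = z := by
  obtain ⟨f, hf⟩ : ∃ f : EuclideanSpace ℝ (Fin d) ≃ₗᵢ[ℝ] EuclideanSpace ℝ (Fin d), f y = z := by
    by_cases hyz : y = z
    · exact ⟨LinearIsometryEquiv.refl ℝ _, hyz⟩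
    · exact ⟨Submodule.reflection (ℝ ∙ (y - z))ᗮ, Submodule.reflection_sub h⟩
  let U := Unitary.linearIsometryEquiv.symm f
  refine ⟨(Matrix.toEuclideanCLM (n := Fin d) (𝕜 := ℝ)).symm (U : _ →L[ℝ] _), ?_, ?_⟩
  · exact Unitary.map_mem (R := EuclideanSpace ℝ (Fin d) →L[ℝ] EuclideanSpace ℝ (Fin d))
      (S := Matrix (Fin d) (Fin d) ℝ) (Matrix.toEuclideanCLM (n := Fin d) (𝕜 := ℝ)).symm U.2
  · simp [rotAct_eq_toEuclideanCLM, U, hf]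

theorem continuous_rotAct_left (x : EuclideanSpace ℝ (Fin d)) :
    Continuous fun R : Matrix (Fin d) (Fin d) ℝ => rotAct d R x :=
  (PiLp.continuous_toLp 2 _).comp (by fun_prop)

theorem sub_rotAct_mem_annulus {R : Matrix (Fin d) (Fin d) ℝ}
    (hR : R ∈ Matrix.orthogonalGroup (Fin d) ℝ) {u v x : EuclideanSpace ℝ (Fin d)}
    (huv : ‖u - v‖ = 1) {δ : ℝ} (hx : ‖x - rotAct d R u‖ ≤ δ) : x - rotAct d R v ∈ annulus d δ := by
  have hRuv : ‖rotAct d R u - rotAct d R v‖ = 1 := by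
    rw [← dist_eq_norm, (isometry_rotAct hR).dist_eq, dist_eq_norm, huv]
  have h := abs_norm_sub_norm_le (x - rotAct d R v) (rotAct d R u - rotAct d R v)
  rw [hRuv, sub_sub_sub_cancel_right] at h
  exact ⟨by linarith [neg_abs_le (‖x - rotAct d R v‖ - 1)],
    by linarith [le_abs_self (‖x - rotAct d R v‖ - 1)]⟩

end Rotation

section OrbitMeasure

variable {d} {μ : Measure (Matrix (Fin d) (Fin d) ℝ)}

theorem map_map_rotAct_of_mem_orthogonalGroup
    (hμinv : ∀ A ∈ Matrix.orthogonalGroup (Fin d) ℝ, μ.map (fun B => A * B) = μ)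
    {A : Matrix (Fin d) (Fin d) ℝ} (hA : A ∈ Matrix.orthogonalGroup (Fin d) ℝ)
    (u : EuclideanSpace ℝ (Fin d)) :
    (μ.map fun R => rotAct d R u).map (rotAct d A) = μ.map fun R => rotAct d R u := by
  have hu := (continuous_rotAct_left (d := d) u).measurable
  rw [Measure.map_map (isometry_rotAct hA).continuous.measurable hu]
  conv_rhs => rw [← hμinv A hA, Measure.map_map hu (continuous_const_mul A).measurable]
  congr 1
  funext R
  exact (rotAct_mul A R u).symm

theorem map_rotAct_ball_eq
    (hμinv : ∀ A ∈ Matrix.orthogonalGroup (Fin d) ℝ, μ.map (fun B => A * B) = μ)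
    (u : EuclideanSpace ℝ (Fin d)) {y z : EuclideanSpace ℝ (Fin d)} (h : ‖y‖ = ‖z‖) (t : ℝ) :
    μ.map (fun R => rotAct d R u) (ball y t) = μ.map (fun R => rotAct d R u) (ball z t) := by
  obtain ⟨A, hA, rfl⟩ := exists_mem_orthogonalGroup_rotAct_eq h
  conv_rhs => rw [← map_map_rotAct_of_mem_orthogonalGroup hμinv hA u,
    Measure.map_apply (isometry_rotAct hA).continuous.measurable measurableSet_ball,
    (isometry_rotAct hA).preimage_ball]

theorem map_rotAct_compl_sphere (hμsupp : μ {A | A ∉ Matrix.orthogonalGroup (Fin d) ℝ} = 0)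
    {u : EuclideanSpace ℝ (Fin d)} (hu : ‖u‖ = 1) :
    μ.map (fun R => rotAct d R u) (sphere 0 1)ᶜ = 0 := by
  rw [Measure.map_apply (continuous_rotAct_left u).measurable isClosed_sphere.measurableSet.compl]
  refine measure_mono_null (fun R hR => ?_) hμsupp
  intro hRO
  apply hR
  rw [mem_sphere_zero_iff_norm, norm_rotAct hRO, hu]

end OrbitMeasure

section Triangle

variable {d}

theorem triangleAvg_indicator_eq (μ : Measure (Matrix (Fin d) (Fin d) ℝ))
    (u v : EuclideanSpace ℝ (Fin d)) {s t : Set (EuclideanSpace ℝ (Fin d))} (hs : MeasurableSet s)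
    (ht : MeasurableSet t) (x : EuclideanSpace ℝ (Fin d)) :
    triangleAvg d μ u v (s.indicator 1) (t.indicator 1) x =
      μ.real ({R | x - rotAct d R u ∈ s} ∩ {R | x - rotAct d R v ∈ t}) := by
  have hmeas : ∀ (w : EuclideanSpace ℝ (Fin d)) {B}, MeasurableSet B →
      MeasurableSet {R : Matrix (Fin d) (Fin d) ℝ | x - rotAct d R w ∈ B} := fun w _ hB =>
    (continuous_const.sub (continuous_rotAct_left w)).measurable hB
  rw [triangleAvg, ← integral_indicator_one ((hmeas u hs).inter (hmeas v ht))]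
  congr 1
  funext R
  by_cases hu : x - rotAct d R u ∈ s <;> by_cases hv : x - rotAct d R v ∈ t <;> simp [hu, hv]

theorem triangleAvg_ball_annulus_ge (μ : Measure (Matrix (Fin d) (Fin d) ℝ))
    [IsProbabilityMeasure μ]
    (hμsupp : μ {A | A ∉ Matrix.orthogonalGroup (Fin d) ℝ} = 0)
    (hμinv : ∀ A ∈ Matrix.orthogonalGroup (Fin d) ℝ, μ.map (fun B => A * B) = μ)
    {u v : EuclideanSpace ℝ (Fin d)} (hu : ‖u‖ = 1) (huv : ‖u - v‖ = 1)
    {δ : ℝ} (hδ0 : 0 < δ) (hδ1 : δ ≤ 1) {x : EuclideanSpace ℝ (Fin d)} (hx : |‖x‖ - 1| ≤ δ / 2) :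
    (1 / 4) ^ (d - 1) / (2 ^ d + d) * δ ^ (d - 1) ≤
      triangleAvg d μ u v ((ball (0 : EuclideanSpace ℝ (Fin d)) δ).indicator 1)
        ((annulus d δ).indicator 1) x := by
  have : Nontrivial (EuclideanSpace ℝ (Fin d)) :=
    nontrivial_of_ne u 0 (by simp [← norm_ne_zero_iff, hu])
  have hannulus : MeasurableSet (annulus d δ) :=
    ((isClosed_le continuous_const continuous_norm).inter
      (isClosed_le continuous_norm continuous_const)).measurableSet
  rw [triangleAvg_indicator_eq μ u v measurableSet_ball hannulus]
  set ν := μ.map fun R => rotAct d R u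
  have : IsProbabilityMeasure ν :=
    Measure.isProbabilityMeasure_map (continuous_rotAct_left u).measurable.aemeasurable
  have hx0 : x ≠ 0 := fun h => by norm_num [h] at hx; linarith
  obtain ⟨y, hy, hxy⟩ := exists_norm_eq_one_dist_eq hx0
  have hcap := ofReal_le_measure_ball_of_sphere ν (map_rotAct_compl_sphere hμsupp hu)
    (fun y z hy hz => map_rotAct_ball_eq hμinv u (hy.trans hz.symm)) (s := δ / 4) (by positivity)
    (by linarith) hy
  rw [finrank_euclideanSpace_fin] at hcap
  have hsub : ν (ball y (2 * (δ / 4))) ≤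
      μ ({R | x - rotAct d R u ∈ ball 0 δ} ∩ {R | x - rotAct d R v ∈ annulus d δ}) := by
    rw [Measure.map_apply (continuous_rotAct_left u).measurable measurableSet_ball,
      ← measure_inter_conull (t := {A | A ∈ Matrix.orthogonalGroup (Fin d) ℝ}) hμsupp]
    refine measure_mono fun R ⟨hR, hRO⟩ => ?_
    have hRx : ‖x - rotAct d R u‖ < δ := by
      rw [← dist_eq_norm]
      linarith [dist_triangle x y (rotAct d R u), hxy.trans_le hx, dist_comm (rotAct d R u) y,
        mem_ball.1 hR]
    exact ⟨mem_ball_zero_iff.2 hRx, sub_rotAct_mem_annulus hRO huv hRx.le⟩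
  calc (1 / 4) ^ (d - 1) / (2 ^ d + d) * δ ^ (d - 1) = (δ / 4) ^ (d - 1) / (2 ^ d + d) := by ring
    _ ≤ _ := (ENNReal.ofReal_le_iff_le_toReal (measure_ne_top _ _)).1 (hcap.trans hsub)

end Triangle

theorem triangle_necessary_condition_three
    (μ : Measure (Matrix (Fin d) (Fin d) ℝ)) [IsProbabilityMeasure μ]
    (hμsupp : μ {A | A ∉ Matrix.orthogonalGroup (Fin d) ℝ} = 0)
    (hμinv : ∀ A ∈ Matrix.orthogonalGroup (Fin d) ℝ, μ.map (fun B => A * B) = μ)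
    (u v : EuclideanSpace ℝ (Fin d)) (hu : ‖u‖ = 1) (huv : ‖u - v‖ = 1)
    (p q r : ℝ≥0∞) (hp : 1 ≤ p) (hq : 1 ≤ q) (hr : 0 < r)
    (C : ℝ≥0)
    (hbound : ∀ f g : EuclideanSpace ℝ (Fin d) → ℝ, Measurable f → Measurable g →
      eLpNorm (triangleAvg d μ u v f g) r volume ≤
        C * eLpNorm f p volume * eLpNorm g q volume) :
    (d : ℝ≥0∞) / p + 1 / q ≤ (d : ℝ≥0∞) - 1 + 1 / r ∧
      ∃ c > (0 : ℝ), ∀ δ : ℝ, 0 < δ → δ ≤ 1 → ∀ x : EuclideanSpace ℝ (Fin d),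
        |‖x‖ - 1| ≤ δ / 2 →
          c * δ ^ (d - 1) ≤
            triangleAvg d μ u v ((ball (0 : EuclideanSpace ℝ (Fin d)) δ).indicator 1)
              ((annulus d δ).indicator 1) x := by
  have : Nontrivial (EuclideanSpace ℝ (Fin d)) :=
    nontrivial_of_ne u 0 (by simp [← norm_ne_zero_iff, hu])
  have hkey := fun δ hδ0 hδ1 x hx =>
    triangleAvg_ball_annulus_ge μ hμsupp hμinv hu huv (δ := δ) hδ0 hδ1 (x := x) hx
  refine ⟨?_, _, by positivity, hkey⟩
  have h := natCast_div_add_one_div_le_of_eLpNorm_le volume (triangleAvg d μ u v)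
    (zero_lt_one.trans_le hp).ne' (zero_lt_one.trans_le hq).ne' hr.ne' C hbound
    (c := (1 / 4) ^ (d - 1) / (2 ^ d + d)) (by positivity)
    (by rw [finrank_euclideanSpace_fin]; exact hkey)
  simpa only [finrank_euclideanSpace_fin] using h
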